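/- Let i_x = ⌊n x/(x+1)⌋. There exists N such that for all n ≥ N and all real x with (log n)/(6n) ≤ x ≤ 1: (a) Σ_{i : |i − i_x| > i_x^{3/4}, i ≤ 60 i_x} C(n,i)^2 x^{2i} ≤ (1/(nx)) · C(n,i_x)^2 x^{2 i_x}, and (b) Σ_{i : 60 i_x < i ≤ n} C(n,i)^2 x^{2i} ≤ n^{−1/5} · C(n,i_x)^2 x^{2 i_x}. -/

import Mathlib

/-
With `m = i_x` and `a i = C(n,i)^2 x^(2i)`, the identity `a (i+1) (i+1)^2 = a i ((n-i) x)^2`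
together with `m ≤ (n-m) x ≤ m + 2` shows that `a` increases up to `m`, decreases from `m + 1`
on, and `a (m+1) ≤ 4 a m`. Past distance `t` from `m` every step loses a factor
`exp (-(t-1)/m)`, so `a i ≤ 4 exp (-t(t-1)/m) a m` once `|i - m| ≥ 2t`; taking `2t ≈ m^(3/4)`
gives `4 exp (-√m / 8) a m`, which beats the `60 m + 1` terms of (a) against `n x < 2 (m+1)`.
Past `2m + 3` the ratio is at most `1/4`, so the sum in (b) is at most `4^(-3(m+1)) a m`, and
`x ≥ log n / (6n)` gives `log n < 12 (m + 1)`.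
-/

open Real
open scoped Classical

/-- `i_x = ⌊n x/(x+1)⌋`. -/
noncomputable def idx (n : ℕ) (x : ℝ) : ℕ := ⌊(n : ℝ) * x / (x + 1)⌋₊

open Finset Filter

lemma sum_range_le_div_one_sub {u : ℕ → ℝ} {c : ℝ} (hc₀ : 0 ≤ c) (hc₁ : c < 1) (hu₀ : 0 ≤ u 0)
    (h : ∀ k, u (k + 1) ≤ c * u k) (K : ℕ) : ∑ k ∈ range K, u k ≤ u 0 / (1 - c) :=
  calc ∑ k ∈ range K, u k ≤ ∑ k ∈ range K, c ^ k * u 0 :=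
        sum_le_sum fun k _ => le_geom hc₀ k fun j _ => h j
    _ = (∑ k ∈ Ico 0 K, c ^ k) * u 0 := by rw [← sum_mul, range_eq_Ico]
    _ ≤ c ^ 0 / (1 - c) * u 0 := by gcongr; exact geom_sum_Ico_le_of_lt_one hc₀ hc₁
    _ = u 0 / (1 - c) := by ring

lemma sq_le_exp_neg_of_le_one_sub {y c : ℝ} (hy : 0 ≤ y) (h : y ≤ 1 - c / 2) :
    y ^ 2 ≤ exp (-c) :=
  calc y ^ 2 ≤ exp (-(c / 2)) ^ 2 := by gcongr; linarith [add_one_le_exp (-(c / 2))]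
    _ = exp (-c) := by rw [← exp_nat_mul]; ring_nf

noncomputable def sqBinomTerm (n : ℕ) (x : ℝ) (i : ℕ) : ℝ := (n.choose i : ℝ) ^ 2 * x ^ (2 * i)

section SqBinomTerm

variable {n : ℕ} {x : ℝ}

lemma sqBinomTerm_nonneg (i : ℕ) : 0 ≤ sqBinomTerm n x i := by
  unfold sqBinomTerm; rw [pow_mul]; positivity

lemma sqBinomTerm_succ_mul (i : ℕ) :
    sqBinomTerm n x (i + 1) * ((i : ℝ) + 1) ^ 2 = sqBinomTerm n x i * ((n - i : ℕ) * x) ^ 2 := by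
  have h : (n.choose (i + 1) : ℝ) * ((i : ℝ) + 1) = n.choose i * (n - i : ℕ) := by
    exact_mod_cast Nat.choose_succ_right_eq n i
  unfold sqBinomTerm
  rw [mul_add, mul_one, pow_add]
  linear_combination
    (x ^ (2 * i) * x ^ 2 * ((n.choose (i + 1) : ℝ) * ((i : ℝ) + 1) + n.choose i * (n - i : ℕ))) * h

lemma idx_mul_le (hx : 0 < x) : (idx n x : ℝ) * (x + 1) ≤ n * x :=
  (le_div_iff₀ (by linarith)).1 (Nat.floor_le (by positivity))

lemma mul_lt_idx_add_one_mul (hx : 0 < x) : n * x < (idx n x + 1) * (x + 1) :=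
  (div_lt_iff₀ (by linarith)).1 (Nat.lt_floor_add_one _)

lemma idx_le (hx : 0 < x) : idx n x ≤ n := by
  have := idx_mul_le (n := n) hx
  exact_mod_cast (by nlinarith : (idx n x : ℝ) ≤ n)

lemma idx_le_sub_idx_mul (hx : 0 < x) : (idx n x : ℝ) ≤ (n - idx n x : ℕ) * x := by
  rw [Nat.cast_sub (idx_le hx)]
  linarith [idx_mul_le (n := n) hx]

lemma sub_idx_mul_le (hx₀ : 0 < x) (hx₁ : x ≤ 1) : ((n - idx n x : ℕ) : ℝ) * x ≤ idx n x + 2 := by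
  rw [Nat.cast_sub (idx_le hx₀)]
  linarith [mul_lt_idx_add_one_mul (n := n) hx₀]

lemma mul_lt_two_mul_idx_add_one (hx₀ : 0 < x) (hx₁ : x ≤ 1) : n * x < 2 * (idx n x + 1) := by
  nlinarith [mul_lt_idx_add_one_mul (n := n) hx₀]

lemma sqBinomTerm_succ_le (hx₀ : 0 < x) (hx₁ : x ≤ 1) {i : ℕ} (hi : idx n x ≤ i) :
    sqBinomTerm n x (i + 1) ≤ (((idx n x : ℝ) + 2) / (i + 1)) ^ 2 * sqBinomTerm n x i := by
  rw [div_pow, div_mul_eq_mul_div, le_div_iff₀ (by positivity), sqBinomTerm_succ_mul,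
    mul_comm (((idx n x : ℝ) + 2) ^ 2)]
  have : ((n - i : ℕ) : ℝ) * x ≤ idx n x + 2 := calc
    ((n - i : ℕ) : ℝ) * x ≤ (n - idx n x : ℕ) * x := by gcongr
    _ ≤ idx n x + 2 := sub_idx_mul_le hx₀ hx₁
  gcongr
  exact sqBinomTerm_nonneg i

lemma sqBinomTerm_le_succ (hx : 0 < x) {i : ℕ} (hi : i < idx n x) :
    sqBinomTerm n x i ≤ (((i : ℝ) + 1) / idx n x) ^ 2 * sqBinomTerm n x (i + 1) := by
  have hm : (0 : ℝ) < idx n x := by exact_mod_cast (Nat.zero_le i).trans_lt hi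
  rw [div_pow, div_mul_eq_mul_div, le_div_iff₀ (by positivity), mul_comm (((i : ℝ) + 1) ^ 2),
    sqBinomTerm_succ_mul]
  have : (idx n x : ℝ) ≤ (n - i : ℕ) * x := calc
    (idx n x : ℝ) ≤ (n - idx n x : ℕ) * x := idx_le_sub_idx_mul hx
    _ ≤ (n - i : ℕ) * x := by gcongr
  gcongr
  exact sqBinomTerm_nonneg i

lemma sqBinomTerm_monotoneOn (hx : 0 < x) : MonotoneOn (sqBinomTerm n x) (Set.Iic (idx n x)) :=
  monotoneOn_of_le_succ Set.ordConnected_Iic fun i _ _ hi => by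
    rw [Order.succ_eq_add_one, Set.mem_Iic] at *
    calc sqBinomTerm n x i ≤ (((i : ℝ) + 1) / idx n x) ^ 2 * sqBinomTerm n x (i + 1) :=
          sqBinomTerm_le_succ hx hi
      _ ≤ 1 * sqBinomTerm n x (i + 1) := by
          gcongr
          · exact sqBinomTerm_nonneg _
          refine pow_le_one₀ (by positivity) (div_le_one_of_le₀ ?_ (by positivity))
          exact_mod_cast hi
      _ = sqBinomTerm n x (i + 1) := one_mul _

lemma sqBinomTerm_antitoneOn (hx₀ : 0 < x) (hx₁ : x ≤ 1) :
    AntitoneOn (sqBinomTerm n x) (Set.Ici (idx n x + 1)) :=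
  antitoneOn_nat_Ici_of_succ_le fun i hi =>
    calc sqBinomTerm n x (i + 1) ≤ (((idx n x : ℝ) + 2) / (i + 1)) ^ 2 * sqBinomTerm n x i :=
          sqBinomTerm_succ_le hx₀ hx₁ (by omega)
      _ ≤ 1 * sqBinomTerm n x i := by
          gcongr
          · exact sqBinomTerm_nonneg _
          refine pow_le_one₀ (by positivity) (div_le_one_of_le₀ ?_ (by positivity))
          exact_mod_cast (by omega : idx n x + 2 ≤ i + 1)
      _ = sqBinomTerm n x i := one_mul _

lemma sqBinomTerm_le_four_mul (hx₀ : 0 < x) (hx₁ : x ≤ 1) {i : ℕ} (hi : idx n x ≤ i) :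
    sqBinomTerm n x i ≤ 4 * sqBinomTerm n x (idx n x) := by
  have h₀ := sqBinomTerm_nonneg (n := n) (x := x) (idx n x)
  rcases hi.eq_or_lt with rfl | hi
  · linarith
  calc sqBinomTerm n x i ≤ sqBinomTerm n x (idx n x + 1) :=
        sqBinomTerm_antitoneOn hx₀ hx₁ (Set.mem_Ici.2 le_rfl) (Set.mem_Ici.2 hi) hi
    _ ≤ (((idx n x : ℝ) + 2) / (idx n x + 1)) ^ 2 * sqBinomTerm n x (idx n x) :=
        sqBinomTerm_succ_le hx₀ hx₁ le_rfl
    _ ≤ 2 ^ 2 * sqBinomTerm n x (idx n x) := by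
        gcongr
        rw [div_le_iff₀ (by positivity)]
        linarith
    _ = 4 * sqBinomTerm n x (idx n x) := by norm_num

lemma sqBinomTerm_idx_add_two_mul_le (hx₀ : 0 < x) (hx₁ : x ≤ 1) {t : ℕ} (ht : 1 ≤ t)
    (htm : 2 * t ≤ idx n x) :
    sqBinomTerm n x (idx n x + 2 * t) ≤
      4 * exp (-(t * (t - 1) / idx n x)) * sqBinomTerm n x (idx n x) := by
  set m := idx n x
  have hM : (0 : ℝ) < m := by exact_mod_cast (by omega : 0 < m)
  have hstep : ∀ k < t, sqBinomTerm n x (m + t + (k + 1)) ≤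
      exp (-((t - 1) / m)) * sqBinomTerm n x (m + t + k) := fun k _ =>
    calc sqBinomTerm n x (m + t + k + 1)
        ≤ (((m : ℝ) + 2) / ((m + t + k : ℕ) + 1)) ^ 2 * sqBinomTerm n x (m + t + k) :=
          sqBinomTerm_succ_le hx₀ hx₁ (by omega)
      _ ≤ exp (-((t - 1) / m)) * sqBinomTerm n x (m + t + k) := by
          gcongr
          · exact sqBinomTerm_nonneg _
          apply sq_le_exp_neg_of_le_one_sub (by positivity)
          have htm' : (2 * t : ℝ) ≤ m := by exact_mod_cast htm
          have ht' : (1 : ℝ) ≤ t := by exact_mod_cast ht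
          rw [div_le_iff₀ (by positivity)]
          push_cast
          field_simp
          nlinarith
  calc sqBinomTerm n x (m + 2 * t) = sqBinomTerm n x (m + t + t) := by ring_nf
    _ ≤ exp (-((t - 1) / m)) ^ t * sqBinomTerm n x (m + t) :=
        le_geom (u := fun k => sqBinomTerm n x (m + t + k)) (exp_pos _).le t hstep
    _ ≤ exp (-((t - 1) / m)) ^ t * (4 * sqBinomTerm n x m) := by
        gcongr
        exact sqBinomTerm_le_four_mul hx₀ hx₁ (by omega)
    _ = 4 * exp (-(t * (t - 1) / m)) * sqBinomTerm n x m := by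
        rw [← exp_nat_mul]; ring_nf

lemma sqBinomTerm_idx_sub_two_mul_le (hx : 0 < x) {t : ℕ} (htm : 2 * t ≤ idx n x) :
    sqBinomTerm n x (idx n x - 2 * t) ≤
      exp (-(t * (t - 1) / idx n x)) * sqBinomTerm n x (idx n x) := by
  set m := idx n x
  have hstep : ∀ k < t, sqBinomTerm n x (m - t - (k + 1)) ≤
      exp (-((t - 1) / m)) * sqBinomTerm n x (m - t - k) := by
    intro k hk
    have hM : (0 : ℝ) < m := by exact_mod_cast (by omega : 0 < m)
    have hj : ((m - t - (k + 1) : ℕ) : ℝ) + 1 + t ≤ m := by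
      exact_mod_cast (by omega : m - t - (k + 1) + 1 + t ≤ m)
    rw [show m - t - k = m - t - (k + 1) + 1 by omega]
    calc sqBinomTerm n x (m - t - (k + 1))
        ≤ ((((m - t - (k + 1) : ℕ) : ℝ) + 1) / m) ^ 2 * sqBinomTerm n x (m - t - (k + 1) + 1) :=
          sqBinomTerm_le_succ hx (by omega)
      _ ≤ exp (-((t - 1) / m)) * sqBinomTerm n x (m - t - (k + 1) + 1) := by
          gcongr
          · exact sqBinomTerm_nonneg _
          apply sq_le_exp_neg_of_le_one_sub (by positivity)
          rw [div_le_iff₀ hM]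
          field_simp
          linarith
  calc sqBinomTerm n x (m - 2 * t) = sqBinomTerm n x (m - t - t) := by rw [two_mul, Nat.sub_sub]
    _ ≤ exp (-((t - 1) / m)) ^ t * sqBinomTerm n x (m - t - 0) :=
        le_geom (u := fun k => sqBinomTerm n x (m - t - k)) (exp_pos _).le t hstep
    _ ≤ exp (-((t - 1) / m)) ^ t * sqBinomTerm n x m :=
        mul_le_mul_of_nonneg_left (sqBinomTerm_monotoneOn hx (Set.mem_Iic.2 (by omega))
          (Set.mem_Iic.2 le_rfl) (by omega)) (by positivity)
    _ = exp (-(t * (t - 1) / m)) * sqBinomTerm n x m := by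
        rw [← exp_nat_mul]; ring_nf

lemma sqBinomTerm_le_of_far (hx₀ : 0 < x) (hx₁ : x ≤ 1) {t : ℕ} (ht : 1 ≤ t)
    (htm : 2 * t ≤ idx n x) {i : ℕ} (hi : i + 2 * t ≤ idx n x ∨ idx n x + 2 * t ≤ i) :
    sqBinomTerm n x i ≤ 4 * exp (-(t * (t - 1) / idx n x)) * sqBinomTerm n x (idx n x) := by
  rcases hi with hi | hi
  · calc sqBinomTerm n x i ≤ sqBinomTerm n x (idx n x - 2 * t) :=
          sqBinomTerm_monotoneOn hx₀ (Set.mem_Iic.2 (by omega)) (Set.mem_Iic.2 (by omega))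
            (by omega)
      _ ≤ exp (-(t * (t - 1) / idx n x)) * sqBinomTerm n x (idx n x) :=
          sqBinomTerm_idx_sub_two_mul_le hx₀ htm
      _ ≤ 4 * exp (-(t * (t - 1) / idx n x)) * sqBinomTerm n x (idx n x) := by
          gcongr
          · exact sqBinomTerm_nonneg _
          linarith [exp_pos (-(t * (t - 1) / idx n x))]
  · calc sqBinomTerm n x i ≤ sqBinomTerm n x (idx n x + 2 * t) :=
          sqBinomTerm_antitoneOn hx₀ hx₁ (Set.mem_Ici.2 (by omega)) (Set.mem_Ici.2 (by omega)) hi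
      _ ≤ 4 * exp (-(t * (t - 1) / idx n x)) * sqBinomTerm n x (idx n x) :=
          sqBinomTerm_idx_add_two_mul_le hx₀ hx₁ ht htm

lemma sqBinomTerm_le_of_rpow_lt_abs_sub (hx₀ : 0 < x) (hx₁ : x ≤ 1) (hm : 81 ≤ (idx n x : ℝ))
    {i : ℕ} (hi : (idx n x : ℝ) ^ ((3 : ℝ) / 4) < |(i : ℝ) - idx n x|) :
    sqBinomTerm n x i ≤ 4 * exp (-(√(idx n x) / 8)) * sqBinomTerm n x (idx n x) := by
  set m := idx n x
  set q : ℝ := (m : ℝ) ^ ((1 : ℝ) / 4)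
  have hm₀ : (0 : ℝ) ≤ m := by positivity
  have hq4 : q ^ 4 = m := by rw [← rpow_mul_natCast hm₀]; norm_num
  have hq3 : (m : ℝ) ^ ((3 : ℝ) / 4) = q ^ 3 := by rw [← rpow_mul_natCast hm₀]; norm_num
  have hq2 : √(m : ℝ) = q ^ 2 := by rw [sqrt_eq_rpow, ← rpow_mul_natCast hm₀]; norm_num
  have hq : 3 ≤ q := le_of_pow_le_pow_left₀ four_ne_zero (by positivity) (by rw [hq4]; linarith)
  have hq27 : 27 ≤ q ^ 3 := by nlinarith
  set t := ⌊q ^ 3 / 2⌋₊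
  have h2t : 2 * (t : ℝ) ≤ q ^ 3 := by linarith [Nat.floor_le (by positivity : 0 ≤ q ^ 3 / 2)]
  have ht : q ^ 3 / 2 - 1 < t := Nat.sub_one_lt_floor _
  have ht₁ : 1 ≤ t := by exact_mod_cast (by linarith : (1 : ℝ) ≤ t)
  have htm : 2 * t ≤ m := by
    have : q ^ 3 ≤ q ^ 4 := pow_le_pow_right₀ (by linarith) (by norm_num)
    exact_mod_cast (by linarith : (2 * t : ℝ) ≤ m)
  have hfar : i + 2 * t ≤ m ∨ m + 2 * t ≤ i := by
    rw [hq3] at hi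
    rcases le_or_gt i m with h | h
    · rw [abs_of_nonpos (sub_nonpos.2 (by exact_mod_cast h))] at hi
      exact .inl (by exact_mod_cast (by linarith : (i + 2 * t : ℝ) ≤ m))
    · rw [abs_of_pos (sub_pos.2 (by exact_mod_cast h))] at hi
      exact .inr (by exact_mod_cast (by linarith : (m + 2 * t : ℝ) ≤ i))
  have hexp : exp (-(t * (t - 1) / m)) ≤ exp (-(√m / 8)) := by
    rw [exp_le_exp, neg_le_neg_iff, hq2, ← hq4, div_le_div_iff₀ (by norm_num) (by positivity)]
    have : (q ^ 3 / 2 - 1) * (q ^ 3 / 2 - 2) ≤ t * (t - 1) :=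
      mul_le_mul ht.le (by linarith) (by linarith) (by linarith)
    nlinarith
  calc sqBinomTerm n x i ≤ 4 * exp (-(t * (t - 1) / m)) * sqBinomTerm n x m :=
        sqBinomTerm_le_of_far hx₀ hx₁ ht₁ htm hfar
    _ ≤ 4 * exp (-(√m / 8)) * sqBinomTerm n x m := by
        gcongr
        exact sqBinomTerm_nonneg _

lemma sum_sqBinomTerm_far_le (hx₀ : 0 < x) (hx₁ : x ≤ 1) (hm : 81 ≤ (idx n x : ℝ))
    (hsmall : 4 * (60 * idx n x + 1) * (2 * (idx n x + 1)) * exp (-(√(idx n x) / 8)) ≤ 1) :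
    ∑ i ∈ (range (n + 1)).filter (fun i : ℕ => (idx n x : ℝ) ^ ((3 : ℝ) / 4) <
        |(i : ℝ) - idx n x| ∧ (i : ℝ) ≤ 60 * idx n x), sqBinomTerm n x i ≤
      1 / (n * x) * sqBinomTerm n x (idx n x) := by
  set m := idx n x
  set s := (range (n + 1)).filter (fun i : ℕ => (m : ℝ) ^ ((3 : ℝ) / 4) <
        |(i : ℝ) - m| ∧ (i : ℝ) ≤ 60 * m)
  have hcard : (#s : ℝ) ≤ 60 * m + 1 := by
    have hsub : s ⊆ range (60 * m + 1) := fun i hi => by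
      have : (i : ℝ) ≤ (60 * m : ℕ) := by push_cast; exact (mem_filter.1 hi).2.2
      exact mem_range.2 (Nat.lt_succ_of_le (by exact_mod_cast this))
    exact_mod_cast (card_le_card hsub).trans (card_range _).le
  have hn : (0 : ℝ) < n := by
    have : (m : ℝ) ≤ n := by exact_mod_cast idx_le hx₀
    linarith
  have hnx : (n : ℝ) * x < 2 * (m + 1) := mul_lt_two_mul_idx_add_one hx₀ hx₁
  calc ∑ i ∈ s, sqBinomTerm n x i ≤ #s • (4 * exp (-(√m / 8)) * sqBinomTerm n x m) :=
        sum_le_card_nsmul _ _ _ fun i hi =>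
          sqBinomTerm_le_of_rpow_lt_abs_sub hx₀ hx₁ hm (mem_filter.1 hi).2.1
    _ ≤ (60 * m + 1) * (4 * exp (-(√m / 8)) * sqBinomTerm n x m) := by
        rw [nsmul_eq_mul]
        gcongr
        exact mul_nonneg (by positivity) (sqBinomTerm_nonneg _)
    _ ≤ 1 / (n * x) * sqBinomTerm n x m := by
        rw [← mul_assoc]
        gcongr
        · exact sqBinomTerm_nonneg _
        rw [le_div_iff₀ (by positivity)]
        calc (60 * m + 1) * (4 * exp (-(√m / 8))) * (n * x)
            ≤ (60 * m + 1) * (4 * exp (-(√m / 8))) * (2 * (m + 1)) := by gcongr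
          _ ≤ 1 := by linarith

lemma sqBinomTerm_succ_le_quarter (hx₀ : 0 < x) (hx₁ : x ≤ 1) {i : ℕ} (hi : 2 * idx n x + 3 ≤ i) :
    sqBinomTerm n x (i + 1) ≤ 1 / 4 * sqBinomTerm n x i := by
  refine (sqBinomTerm_succ_le hx₀ hx₁ (by omega)).trans ?_
  gcongr
  · exact sqBinomTerm_nonneg _
  rw [show (1 / 4 : ℝ) = (1 / 2) ^ 2 by norm_num]
  refine pow_le_pow_left₀ (by positivity) ?_ 2
  rw [div_le_iff₀ (by positivity)]
  have : (2 * idx n x + 3 : ℝ) ≤ i := by exact_mod_cast hi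
  linarith

lemma sum_sqBinomTerm_gt_sixty_mul_le (hx₀ : 0 < x) (hx₁ : x ≤ 1) (hm : 1 ≤ idx n x) :
    ∑ i ∈ (range (n + 1)).filter (fun i : ℕ => 60 * (idx n x : ℝ) < i), sqBinomTerm n x i ≤
      exp (-(3 * (idx n x + 1))) * sqBinomTerm n x (idx n x) := by
  set m := idx n x
  have ham := sqBinomTerm_nonneg (n := n) (x := x) m
  have hfirst : sqBinomTerm n x (60 * m + 1) ≤ (1 / 4) ^ (3 * (m + 1) + 1) * sqBinomTerm n x m :=
    calc sqBinomTerm n x (60 * m + 1) ≤ sqBinomTerm n x (2 * m + 3 + (3 * (m + 1) + 2)) :=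
          sqBinomTerm_antitoneOn hx₀ hx₁ (Set.mem_Ici.2 (by omega)) (Set.mem_Ici.2 (by omega))
            (by omega)
      _ ≤ (1 / 4) ^ (3 * (m + 1) + 2) * sqBinomTerm n x (2 * m + 3 + 0) :=
          le_geom (u := fun k => sqBinomTerm n x (2 * m + 3 + k)) (by norm_num) _
            fun k _ => sqBinomTerm_succ_le_quarter (i := 2 * m + 3 + k) hx₀ hx₁ (by omega)
      _ ≤ (1 / 4) ^ (3 * (m + 1) + 2) * (4 * sqBinomTerm n x m) := by
          gcongr
          exact sqBinomTerm_le_four_mul hx₀ hx₁ (by omega)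
      _ = (1 / 4) ^ (3 * (m + 1) + 1) * sqBinomTerm n x m := by ring
  have hquarter : (1 / 4 : ℝ) ≤ exp (-1) := by
    rw [exp_neg, one_div]
    exact inv_anti₀ (exp_pos 1) (by linarith [exp_one_lt_d9])
  calc ∑ i ∈ (range (n + 1)).filter (fun i : ℕ => 60 * (m : ℝ) < i), sqBinomTerm n x i
      ≤ ∑ i ∈ Ico (60 * m + 1) (n + 1), sqBinomTerm n x i := by
        refine sum_le_sum_of_subset_of_nonneg (fun i hi => ?_) fun i _ _ => sqBinomTerm_nonneg i
        rw [mem_filter, mem_range] at hi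
        have : ((60 * m : ℕ) : ℝ) < i := by push_cast; exact hi.2
        exact mem_Ico.2 ⟨by exact_mod_cast this, hi.1⟩
    _ = ∑ k ∈ range (n + 1 - (60 * m + 1)), sqBinomTerm n x (60 * m + 1 + k) :=
        sum_Ico_eq_sum_range _ _ _
    _ ≤ sqBinomTerm n x (60 * m + 1 + 0) / (1 - 1 / 4) :=
        sum_range_le_div_one_sub (u := fun k => sqBinomTerm n x (60 * m + 1 + k)) (by norm_num)
          (by norm_num) (sqBinomTerm_nonneg _)
          (fun k => sqBinomTerm_succ_le_quarter (i := 60 * m + 1 + k) hx₀ hx₁ (by omega)) _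
    _ ≤ (1 / 4) ^ (3 * (m + 1) + 1) * sqBinomTerm n x m / (1 - 1 / 4) := by gcongr
    _ ≤ (1 / 4) ^ (3 * (m + 1)) * sqBinomTerm n x m := by
        have h := mul_nonneg (pow_nonneg (by norm_num : (0 : ℝ) ≤ 1 / 4) (3 * (m + 1))) ham
        rw [pow_succ]
        linarith [show (1 / 4 : ℝ) ^ (3 * (m + 1)) * (1 / 4) * sqBinomTerm n x m / (1 - 1 / 4) =
          1 / 3 * ((1 / 4) ^ (3 * (m + 1)) * sqBinomTerm n x m) by ring]
    _ ≤ exp (-1) ^ (3 * (m + 1)) * sqBinomTerm n x m := by gcongr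
    _ = exp (-(3 * (m + 1))) * sqBinomTerm n x m := by
        rw [← exp_nat_mul]; push_cast; ring_nf

end SqBinomTerm

lemma eventually_four_mul_exp_neg_sqrt_le_one :
    ∀ᶠ M : ℝ in atTop, 4 * (60 * M + 1) * (2 * (M + 1)) * exp (-(√M / 8)) ≤ 1 := by
  have hlo := (isLittleO_pow_exp_pos_mul_atTop 4 (by norm_num : (0 : ℝ) < 1 / 8)).bound
    (by norm_num : (0 : ℝ) < 1 / 1000)
  filter_upwards [tendsto_sqrt_atTop.eventually hlo, eventually_ge_atTop 1] with M hM hM₁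
  rw [norm_pow, Real.norm_of_nonneg (sqrt_nonneg M), Real.norm_of_nonneg (exp_pos _).le,
    show √M ^ 4 = M ^ 2 by rw [show 4 = 2 * 2 by rfl, pow_mul, sq_sqrt (by linarith)]] at hM
  rw [show √M / 8 = 1 / 8 * √M by ring, exp_neg, ← div_eq_mul_inv, div_le_one (exp_pos _)]
  nlinarith

lemma log_lt_twelve_mul_idx_add_one {n : ℕ} {x : ℝ} (hn : 0 < (n : ℝ)) (hx₀ : 0 < x) (hx₁ : x ≤ 1)
    (hx : log n / (6 * n) ≤ x) : log n < 12 * (idx n x + 1) := by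
  rw [div_le_iff₀ (by positivity)] at hx
  linarith [mul_lt_two_mul_idx_add_one (n := n) hx₀ hx₁]

/-- for `n` large and `(log n)/(6n) ≤ x ≤ 1`:
(a) `Σ_{i : |i - i_x| > i_x^{3/4}, i ≤ 60 i_x} C(n,i)^2 x^{2i} ≤ (1/(nx)) C(n,i_x)^2 x^{2 i_x}`,
(b) `Σ_{i : 60 i_x < i ≤ n} C(n,i)^2 x^{2i} ≤ n^{-1/5} C(n,i_x)^2 x^{2 i_x}`. -/
theorem stmt_18 :
    ∃ N : ℕ, ∀ n : ℕ, N ≤ n → ∀ x : ℝ,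
      Real.log n / (6 * n) ≤ x → x ≤ 1 →
      ((∑ i ∈ (Finset.range (n + 1)).filter
            (fun i : ℕ => (idx n x : ℝ) ^ ((3 : ℝ) / 4) < |(i : ℝ) - (idx n x : ℝ)| ∧
              (i : ℝ) ≤ 60 * (idx n x : ℝ)),
          (n.choose i : ℝ) ^ 2 * x ^ (2 * i)) ≤
        1 / ((n : ℝ) * x) * ((n.choose (idx n x) : ℝ) ^ 2 * x ^ (2 * idx n x))) ∧
      ((∑ i ∈ (Finset.range (n + 1)).filter
            (fun i : ℕ => 60 * (idx n x : ℝ) < (i : ℝ)),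
          (n.choose i : ℝ) ^ 2 * x ^ (2 * i)) ≤
        (n : ℝ) ^ (-(1 : ℝ) / 5) * ((n.choose (idx n x) : ℝ) ^ 2 * x ^ (2 * idx n x))) := by
  obtain ⟨M₀, hM₀⟩ := eventually_atTop.1 eventually_four_mul_exp_neg_sqrt_le_one
  refine ⟨⌈exp (12 * (max M₀ 81 + 1))⌉₊, fun n hn x hx hx₁ => ?_⟩
  have hexp : exp (12 * (max M₀ 81 + 1)) ≤ n := Nat.ceil_le.1 hn
  have hn₀ : (0 : ℝ) < n := (exp_pos _).trans_le hexp
  have hlog : 12 * (max M₀ 81 + 1) ≤ log n := (le_log_iff_exp_le hn₀).2 hexp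
  have hx₀ : 0 < x := (div_pos (by linarith [le_max_right M₀ 81]) (by positivity)).trans_le hx
  have hm : max M₀ 81 ≤ idx n x := by
    linarith [log_lt_twelve_mul_idx_add_one hn₀ hx₀ hx₁ hx]
  refine ⟨sum_sqBinomTerm_far_le hx₀ hx₁ (le_of_max_le_right hm)
    (hM₀ _ (le_of_max_le_left hm)), ?_⟩
  calc _ ≤ exp (-(3 * (idx n x + 1))) * sqBinomTerm n x (idx n x) :=
        sum_sqBinomTerm_gt_sixty_mul_le hx₀ hx₁
          (by exact_mod_cast (by linarith [le_max_right M₀ 81] : (1 : ℝ) ≤ idx n x))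
    _ ≤ (n : ℝ) ^ (-(1 : ℝ) / 5) * sqBinomTerm n x (idx n x) := by
        gcongr
        · exact sqBinomTerm_nonneg _
        rw [rpow_def_of_pos hn₀, exp_le_exp]
        linarith [log_lt_twelve_mul_idx_add_one hn₀ hx₀ hx₁ hx]
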